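/- arXiv:1101.2183 — 3 statements merged into one kernel-verified Lean document; each statement's English description precedes it below -/
import Mathlib

section
/- For 0 < δ < 1 and λ > 0, the double sum ∑_{k≥1} (e^{λ(1-δ)^{k-1}} - 1) is at most (e^λ - 1)/δ. -/
/-!
By convexity of `exp`, the chord bound `exp (λ x) - 1 ≤ x (exp λ - 1)` holds for `x ∈ [0, 1]`,
so the `k`-th term is dominated by `(1 - δ) ^ k (exp λ - 1)`, whose geometric series sums to
`(exp λ - 1) / δ`.
-/

lemma Real.exp_mul_sub_one_le (lam : ℝ) {x : ℝ} (hx0 : 0 ≤ x) (hx1 : x ≤ 1) :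
    Real.exp (lam * x) - 1 ≤ x * (Real.exp lam - 1) := by
  have h := convexOn_exp.2 (Set.mem_univ lam) (Set.mem_univ 0) hx0 (sub_nonneg.2 hx1)
    (add_sub_cancel x 1)
  simp only [smul_eq_mul, mul_zero, add_zero, Real.exp_zero, mul_one, mul_comm x lam] at h
  linarith

lemma tsum_le_of_le_geometric {f : ℕ → ℝ} {C r : ℝ} (hr0 : 0 ≤ r) (hr1 : r < 1)
    (hf0 : ∀ k, 0 ≤ f k) (hf : ∀ k, f k ≤ C * r ^ k) :
    ∑' k, f k ≤ C / (1 - r) := by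
  have hgeom : Summable fun k ↦ C * r ^ k := (summable_geometric_of_lt_one hr0 hr1).mul_left C
  calc ∑' k, f k ≤ ∑' k, C * r ^ k := (hgeom.of_nonneg_of_le hf0 hf).tsum_le_tsum hf hgeom
    _ = C / (1 - r) := by rw [tsum_mul_left, tsum_geometric_of_lt_one hr0 hr1, div_eq_mul_inv]

theorem stmt_2 (δ lam : ℝ) (hδ0 : 0 < δ) (hδ1 : δ < 1) (hlam : 0 < lam) :
    (∑' k : ℕ, (Real.exp (lam * (1 - δ) ^ k) - 1)) ≤ (Real.exp lam - 1) / δ := by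
  have hq0 : 0 ≤ 1 - δ := by linarith
  have hq1 : 1 - δ < 1 := by linarith
  have hterm_nonneg (k : ℕ) : 0 ≤ Real.exp (lam * (1 - δ) ^ k) - 1 :=
    sub_nonneg.2 (Real.one_le_exp (mul_nonneg hlam.le (pow_nonneg hq0 k)))
  have hterm_le (k : ℕ) :
      Real.exp (lam * (1 - δ) ^ k) - 1 ≤ (Real.exp lam - 1) * (1 - δ) ^ k := by
    rw [mul_comm (Real.exp lam - 1)]
    exact Real.exp_mul_sub_one_le lam (pow_nonneg hq0 k) (pow_le_one₀ hq0 hq1.le)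
  simpa using tsum_le_of_le_geometric hq0 hq1 hterm_nonneg hterm_le
end

section
/- Let (T_k)_{k≥1} be i.i.d. geometric random variables with P(T_1 = j) = p^{j-1}(1-p), j ≥ 1, 0 < p < 1, and let 0 < δ < 1. Then for any t > 0 and any λ > 0 with e^λ p ≤ 1/2, P(∑_{k≥1} (1-δ)^{k-1} T_k ≥ t) ≤ exp(-tλ + λ/δ + (2p/(1-p))·(e^λ - 1)/δ). -/
/-!
Write `s = λ w` with `w = (1 - δ)^k ∈ (0, 1]`. The moment generating function of a geometric
variable is `E e^{sT} = (1 - p) e^s / (1 - p e^s)`, and when `p e^s ≤ 1/2` this is at most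
`exp (s + 2p (e^s - 1))`; by convexity `e^{λ w} - 1 ≤ w (e^λ - 1)`, so
`E e^{λ w T} ≤ exp (w (λ + 2p (e^λ - 1)))`. By independence, the Chernoff bound for the partial
sum `∑_{k<n} (1 - δ)^k T_k` at level `t` is then `exp (-λ t + (λ + 2p (e^λ - 1)) / δ)`, as
`∑_k (1 - δ)^k ≤ 1 / δ`. Continuity of measure along the increasing partial sums, and then
letting the level increase to `t`, transfers the bound to the infinite series.
-/

open MeasureTheory ProbabilityTheory Real Finset
open scoped ENNReal

theorem exp_mul_sub_one_le {w : ℝ} (hw0 : 0 ≤ w) (hw1 : w ≤ 1) (x : ℝ) :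
    exp (w * x) - 1 ≤ w * (exp x - 1) := by
  have := convexOn_exp.2 (Set.mem_univ 0) (Set.mem_univ x) (sub_nonneg.2 hw1) hw0 (by ring)
  simp only [smul_eq_mul, mul_zero, zero_add, exp_zero, mul_one] at this
  linarith

theorem mul_exp_mul_le_of_le_one {p w x : ℝ} (hp : 0 ≤ p) (hw : w ≤ 1) (hx : 0 ≤ x) :
    p * exp (w * x) ≤ exp x * p := by
  rw [mul_comm]
  gcongr
  exact mul_le_of_le_one_left hx hw

theorem one_sub_mul_exp_div_one_sub_mul_exp_le {p s : ℝ} (hp : 0 ≤ p) (hs : 0 ≤ s)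
    (hps : p * exp s ≤ 1 / 2) :
    (1 - p) * exp s / (1 - p * exp s) ≤ exp (s + 2 * p * (exp s - 1)) := by
  have hes : 1 ≤ exp s := one_le_exp hs
  have hratio : (1 - p) / (1 - p * exp s) ≤ 1 + 2 * p * (exp s - 1) := by
    rw [div_le_iff₀ (by linarith)]
    nlinarith [mul_nonneg (mul_nonneg hp (sub_nonneg.2 hes))
      (by linarith : 0 ≤ 1 - 2 * (p * exp s))]
  calc (1 - p) * exp s / (1 - p * exp s) = exp s * ((1 - p) / (1 - p * exp s)) := by ring
    _ ≤ exp s * exp (2 * p * (exp s - 1)) := by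
        gcongr
        linarith [add_one_le_exp (2 * p * (exp s - 1))]
    _ = exp (s + 2 * p * (exp s - 1)) := (exp_add _ _).symm

def HasGeometricLaw {Ω : Type*} [MeasurableSpace Ω] (μ : Measure Ω) (T : Ω → ℕ) (p : ℝ) :
    Prop :=
  ∀ j : ℕ, 1 ≤ j → μ {ω | T ω = j} = ENNReal.ofReal (p ^ (j - 1) * (1 - p))

namespace HasGeometricLaw

variable {Ω : Type*} [MeasurableSpace Ω] {μ : Measure Ω} {T : Ω → ℕ} {p : ℝ}

theorem measure_succ (h : HasGeometricLaw μ T p) (j : ℕ) :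
    μ {ω | T ω = j + 1} = ENNReal.ofReal ((1 - p) * p ^ j) := by
  rw [h (j + 1) (Nat.le_add_left 1 j), Nat.add_sub_cancel, mul_comm]

theorem measure_zero [IsProbabilityMeasure μ] (h : HasGeometricLaw μ T p) (hT : Measurable T)
    (hp0 : 0 ≤ p) (hp1 : p < 1) : μ {ω | T ω = 0} = 0 := by
  have htotal : ∑' j : ℕ, μ {ω | T ω = j} = 1 := by
    rw [← measure_univ (μ := μ), ← Set.preimage_univ (f := T),
      ← tsum_measure_preimage_singleton Set.countable_univ
        fun j _ => hT (measurableSet_singleton j),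
      tsum_univ (f := fun j => μ (T ⁻¹' {j}))]
    rfl
  have hq : 0 ≤ 1 - p := by linarith
  have htail : ∑' j : ℕ, μ {ω | T ω = j + 1} = 1 := by
    simp_rw [h.measure_succ]
    rw [← ENNReal.ofReal_tsum_of_nonneg (fun j => by positivity)
        ((summable_geometric_of_lt_one hp0 hp1).mul_left _), tsum_mul_left,
      tsum_geometric_of_lt_one hp0 hp1, mul_inv_cancel₀ (by linarith), ENNReal.ofReal_one]
  rw [tsum_eq_zero_add' ENNReal.summable, htail] at htotal
  simpa using htotal

theorem lintegral_exp_mul [IsProbabilityMeasure μ] (h : HasGeometricLaw μ T p)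
    (hT : Measurable T) (hp0 : 0 ≤ p) (hp1 : p < 1) {s : ℝ} (hs : p * exp s < 1) :
    ∫⁻ ω, ENNReal.ofReal (exp (s * T ω)) ∂μ
      = ENNReal.ofReal ((1 - p) * exp s / (1 - p * exp s)) := by
  have hr : 0 ≤ p * exp s := by positivity
  have hq : 0 ≤ 1 - p := by linarith
  have hterm (j : ℕ) : ENNReal.ofReal (exp (s * ((j + 1 : ℕ) : ℝ))) * μ {ω | T ω = j + 1}
      = ENNReal.ofReal ((1 - p) * exp s * (p * exp s) ^ j) := by
    rw [h.measure_succ, ← ENNReal.ofReal_mul (exp_pos _).le, mul_pow, ← exp_nat_mul]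
    congr 1
    rw [show s * ((j + 1 : ℕ) : ℝ) = j * s + s by push_cast; ring, exp_add]
    ring
  calc ∫⁻ ω, ENNReal.ofReal (exp (s * T ω)) ∂μ
      = ∫⁻ j, ENNReal.ofReal (exp (s * j)) ∂μ.map T := by
        rw [lintegral_map measurable_from_top hT]
    _ = ∑' j : ℕ, ENNReal.ofReal (exp (s * j)) * μ {ω | T ω = j} := by
        rw [lintegral_countable']
        simp_rw [Measure.map_apply hT (measurableSet_singleton _)]
        rfl
    _ = ∑' j : ℕ, ENNReal.ofReal ((1 - p) * exp s * (p * exp s) ^ j) := by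
        rw [tsum_eq_zero_add' ENNReal.summable, h.measure_zero hT hp0 hp1, mul_zero, zero_add]
        simp_rw [hterm]
    _ = _ := by
        rw [← ENNReal.ofReal_tsum_of_nonneg (fun j => by positivity)
            ((summable_geometric_of_lt_one hr hs).mul_left _), tsum_mul_left,
          tsum_geometric_of_lt_one hr hs, div_eq_mul_inv]

theorem integrable_exp_mul [IsProbabilityMeasure μ] (h : HasGeometricLaw μ T p)
    (hT : Measurable T) (hp0 : 0 ≤ p) (hp1 : p < 1) {s : ℝ} (hs : p * exp s < 1) :
    Integrable (fun ω => exp (s * T ω)) μ := by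
  refine ⟨by fun_prop, ?_⟩
  rw [hasFiniteIntegral_iff_ofReal (ae_of_all _ fun ω => (exp_pos _).le),
    h.lintegral_exp_mul hT hp0 hp1 hs]
  exact ENNReal.ofReal_lt_top

theorem mgf_eq [IsProbabilityMeasure μ] (h : HasGeometricLaw μ T p)
    (hT : Measurable T) (hp0 : 0 ≤ p) (hp1 : p < 1) {s : ℝ} (hs : p * exp s < 1) :
    mgf (fun ω => (T ω : ℝ)) μ s = (1 - p) * exp s / (1 - p * exp s) := by
  rw [mgf, integral_eq_lintegral_of_nonneg_ae (ae_of_all _ fun ω => (exp_pos _).le) (by fun_prop),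
    h.lintegral_exp_mul hT hp0 hp1 hs, ENNReal.toReal_ofReal]
  have : 0 < 1 - p * exp s := by linarith
  have : 0 < 1 - p := by linarith
  positivity

theorem mgf_const_mul_le [IsProbabilityMeasure μ] (h : HasGeometricLaw μ T p)
    (hT : Measurable T) (hp0 : 0 ≤ p) (hp1 : p < 1) {w lam : ℝ} (hw0 : 0 ≤ w) (hw1 : w ≤ 1)
    (hlam : 0 ≤ lam) (hlp : exp lam * p ≤ 1 / 2) :
    mgf (fun ω => w * T ω) μ lam ≤ exp (w * (lam + 2 * p * (exp lam - 1))) := by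
  have hps : p * exp (w * lam) ≤ 1 / 2 := (mul_exp_mul_le_of_le_one hp0 hw1 hlam).trans hlp
  rw [mgf_const_mul, h.mgf_eq hT hp0 hp1 (by linarith)]
  calc _ ≤ exp (w * lam + 2 * p * (exp (w * lam) - 1)) :=
        one_sub_mul_exp_div_one_sub_mul_exp_le hp0 (mul_nonneg hw0 hlam) hps
    _ ≤ exp (w * (lam + 2 * p * (exp lam - 1))) := by
        have := mul_le_mul_of_nonneg_left (exp_mul_sub_one_le hw0 hw1 lam)
          (by positivity : 0 ≤ 2 * p)
        gcongr
        linarith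

end HasGeometricLaw

theorem ProbabilityTheory.iIndepFun.measure_sum_ge_le_exp_mul_prod_mgf {Ω ι : Type*}
    [MeasurableSpace Ω] {μ : Measure Ω} [IsProbabilityMeasure μ] {X : ι → Ω → ℝ}
    (h_indep : iIndepFun X μ) (h_meas : ∀ i, Measurable (X i)) {t : ℝ} (ht : 0 ≤ t)
    (h_int : ∀ i, Integrable (fun ω => exp (t * X i ω)) μ) (s : Finset ι) (ε : ℝ) :
    μ {ω | ε ≤ ∑ i ∈ s, X i ω} ≤ ENNReal.ofReal (exp (-t * ε) * ∏ i ∈ s, mgf (X i) μ t) := by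
  have h := measure_ge_le_exp_mul_mgf (X := ∑ i ∈ s, X i) ε ht
    (h_indep.integrable_exp_mul_sum h_meas (s := s) fun i _ => h_int i)
  rw [h_indep.mgf_sum h_meas] at h
  simp only [Finset.sum_apply] at h
  rw [← ofReal_measureReal]
  exact ENNReal.ofReal_le_ofReal h

theorem measure_sum_mul_geometric_ge_le {Ω ι : Type*} [MeasurableSpace Ω] {μ : Measure Ω}
    [IsProbabilityMeasure μ] {T : ι → Ω → ℕ} (hT : ∀ k, Measurable (T k))
    (hindep : iIndepFun (m := fun _ => ⊤) T μ) {p : ℝ} (hgeom : ∀ k, HasGeometricLaw μ (T k) p)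
    (hp0 : 0 ≤ p) (hp1 : p < 1) {w : ι → ℝ} (hw0 : ∀ k, 0 ≤ w k) (hw1 : ∀ k, w k ≤ 1)
    {lam : ℝ} (hlam : 0 ≤ lam) (hlp : exp lam * p ≤ 1 / 2) (s : Finset ι) (ε : ℝ) :
    μ {ω | ε ≤ ∑ k ∈ s, w k * T k ω}
      ≤ ENNReal.ofReal (exp (-lam * ε + (∑ k ∈ s, w k) * (lam + 2 * p * (exp lam - 1)))) := by
  set X : ι → Ω → ℝ := fun k ω => w k * T k ω
  have hXm (k : ι) : Measurable (X k) := (measurable_from_top.comp (hT k)).const_mul _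
  have hX : iIndepFun X μ := hindep.comp (fun k (n : ℕ) => w k * n) fun _ => measurable_from_top
  have hint (k : ι) : Integrable (fun ω => exp (lam * X k ω)) μ := by
    have hps := (mul_exp_mul_le_of_le_one hp0 (hw1 k) hlam).trans hlp
    simpa only [X, ← mul_assoc, mul_comm lam (w k)] using
      (hgeom k).integrable_exp_mul (hT k) hp0 hp1 (s := w k * lam) (by linarith)
  refine (hX.measure_sum_ge_le_exp_mul_prod_mgf hXm hlam hint s ε).trans
    (ENNReal.ofReal_le_ofReal ?_)
  calc exp (-lam * ε) * ∏ k ∈ s, mgf (X k) μ lam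
      ≤ exp (-lam * ε) * ∏ k ∈ s, exp (w k * (lam + 2 * p * (exp lam - 1))) := by
        gcongr with k
        exacts [fun _ _ => mgf_nonneg,
          (hgeom k).mgf_const_mul_le (hT k) hp0 hp1 (hw0 k) (hw1 k) hlam hlp]
    _ = _ := by rw [← exp_sum, ← exp_add, sum_mul]

-- Levels `t' < t` are needed: the partial sums may increase to `t` without ever reaching it.
theorem measure_ofReal_le_tsum_le {Ω : Type*} [MeasurableSpace Ω] {μ : Measure Ω}
    {X : ℕ → Ω → ℝ} (hX : ∀ k ω, 0 ≤ X k ω) {t : ℝ} {f : ℝ → ℝ≥0∞} (hf : ContinuousAt f t)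
    (h : ∀ t' < t, ∀ n, μ {ω | t' ≤ ∑ k ∈ range n, X k ω} ≤ f t') :
    μ {ω | ENNReal.ofReal t ≤ ∑' k, ENNReal.ofReal (X k ω)} ≤ f t := by
  have hlt : ∀ t' < t, μ {ω | ENNReal.ofReal t ≤ ∑' k, ENNReal.ofReal (X k ω)} ≤ f t' := by
    intro t' ht'
    set A : ℕ → Set Ω := fun n => {ω | t' ≤ ∑ k ∈ range n, X k ω}
    have hsub : {ω | ENNReal.ofReal t ≤ ∑' k, ENNReal.ofReal (X k ω)} ⊆ ⋃ n, A n := by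
      intro ω hω
      by_contra hcon
      simp only [A, Set.mem_iUnion, Set.mem_ofPred_eq, not_exists, not_le] at hcon
      have ht'0 : 0 < t' := by simpa using hcon 0
      have hbound : ∑' k, ENNReal.ofReal (X k ω) ≤ ENNReal.ofReal t' :=
        ENNReal.tsum_le_of_sum_range_le fun n => by
          rw [← ENNReal.ofReal_sum_of_nonneg fun k _ => hX k ω]
          exact ENNReal.ofReal_le_ofReal (hcon n).le
      linarith [(ENNReal.ofReal_le_ofReal_iff ht'0.le).1 (hω.trans hbound)]
    have hmono : Monotone A := fun m n hmn ω hω =>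
      hω.trans (sum_le_sum_of_subset_of_nonneg (range_subset_range.2 hmn) fun k _ _ => hX k ω)
    calc _ ≤ μ (⋃ n, A n) := measure_mono hsub
      _ = ⨆ n, μ (A n) := hmono.measure_iUnion
      _ ≤ f t' := iSup_le (h t' ht')
  exact ge_of_tendsto (hf.tendsto.mono_left nhdsWithin_le_nhds)
    (eventually_nhdsWithin_of_forall (s := Set.Iio t) hlt)

theorem stmt_6_general {Ω : Type*} [MeasureSpace Ω] (μ : Measure Ω) [IsProbabilityMeasure μ]
    (T : ℕ → Ω → ℕ) (hTm : ∀ k, Measurable (T k))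
    (hindep : ProbabilityTheory.iIndepFun (m := fun _ => ⊤) T μ)
    (p : ℝ) (hp0 : 0 < p) (hp1 : p < 1)
    (hgeom : ∀ k, ∀ j : ℕ, 1 ≤ j →
      μ {ω | T k ω = j} = ENNReal.ofReal (p ^ (j - 1) * (1 - p)))
    (δ : ℝ) (hδ0 : 0 < δ) (hδ1 : δ < 1)
    (t lam : ℝ) (hlam : 0 < lam) (hlp : Real.exp lam * p ≤ 1/2) :
    μ {ω | ENNReal.ofReal t
            ≤ ∑' k : ℕ, ENNReal.ofReal ((1 - δ) ^ k * (T k ω : ℝ))}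
      ≤ ENNReal.ofReal
          (Real.exp (-t * lam + lam / δ + (2 * p / (1 - p)) * (Real.exp lam - 1) / δ)) := by
  set K := lam + 2 * p * (exp lam - 1)
  have hK : 0 ≤ K := by have := one_le_exp hlam.le; positivity
  have hpartial (t' : ℝ) (n : ℕ) :
      μ {ω | t' ≤ ∑ k ∈ range n, (1 - δ) ^ k * (T k ω : ℝ)}
        ≤ ENNReal.ofReal (exp (-lam * t' + K / δ)) := by
    refine (measure_sum_mul_geometric_ge_le hTm hindep hgeom hp0.le hp1
      (fun k => pow_nonneg (by linarith) k) (fun k => pow_le_one₀ (by linarith) (by linarith))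
      hlam.le hlp _ t').trans ?_
    have hsum : (∑ k ∈ range n, (1 - δ) ^ k) * K ≤ K / δ := by
      have hgeo := geom_sum_Ico_le_of_lt_one (m := 0) (n := n) (x := 1 - δ) (by linarith)
        (by linarith)
      rw [← range_eq_Ico, pow_zero, sub_sub_cancel] at hgeo
      calc (∑ k ∈ range n, (1 - δ) ^ k) * K ≤ 1 / δ * K := mul_le_mul_of_nonneg_right hgeo hK
        _ = K / δ := by ring
    exact ENNReal.ofReal_le_ofReal (exp_le_exp.2 (by linarith))
  refine (measure_ofReal_le_tsum_le (fun k ω => by positivity)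
    (ENNReal.continuous_ofReal.comp (by fun_prop)).continuousAt fun t' _ => hpartial t').trans ?_
  have h2p : 2 * p ≤ 2 * p / (1 - p) := le_div_self (by positivity) (by linarith) (by linarith)
  have he : 0 ≤ exp lam - 1 := sub_nonneg.2 (one_le_exp hlam.le)
  refine ENNReal.ofReal_le_ofReal (exp_le_exp.2 ?_)
  calc -lam * t + K / δ = -t * lam + lam / δ + 2 * p * (exp lam - 1) / δ := by ring
    _ ≤ -t * lam + lam / δ + 2 * p / (1 - p) * (exp lam - 1) / δ := by gcongr

/-- Chernoff bound for a weighted sum of i.i.d. geometric random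
variables (the sum `∑_{k≥1} (1-δ)^{k-1} T_k` is written as `∑' k:ℕ, (1-δ)^k T_{k+1}`
and is taken in `ℝ≥0∞` to avoid summability issues). -/
theorem stmt_6 {Ω : Type*} [MeasureSpace Ω] (μ : Measure Ω) [IsProbabilityMeasure μ]
    (T : ℕ → Ω → ℕ) (hTm : ∀ k, Measurable (T k))
    (hindep : ProbabilityTheory.iIndepFun (m := fun _ => ⊤) T μ)
    (p : ℝ) (hp0 : 0 < p) (hp1 : p < 1)
    (hgeom : ∀ k, ∀ j : ℕ, 1 ≤ j →
      μ {ω | T k ω = j} = ENNReal.ofReal (p ^ (j - 1) * (1 - p)))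
    (δ : ℝ) (hδ0 : 0 < δ) (hδ1 : δ < 1)
    (t lam : ℝ) (ht : 0 < t) (hlam : 0 < lam) (hlp : Real.exp lam * p ≤ 1/2) :
    μ {ω | ENNReal.ofReal t
            ≤ ∑' k : ℕ, ENNReal.ofReal ((1 - δ) ^ k * (T k ω : ℝ))}
      ≤ ENNReal.ofReal
          (Real.exp (-t * lam + lam / δ + (2 * p / (1 - p)) * (Real.exp lam - 1) / δ)) :=
  stmt_6_general μ T hTm hindep p hp0 hp1 hgeom δ hδ0 hδ1 t lam hlam hlp
end

section
/- Let M be a random variable with |M| ≤ 1 a.s. and P(|M| = 1) = 0, and for 0 < δ < 1 set p_δ = P(1-δ ≤ |M| ≤ 1). Let (M_k, Q_k) be i.i.d. copies of (M, Q) with |Q| ≤ q a.s. (q > 0), and let R be a random variable satisfying R =_d MR + Q with (M,Q) independent of R. Then for all sufficiently large x, P(|R| > x) ≤ exp((x/(4q)) · ln p_{2q/x}). -/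
/-!
Write `T i = ∑ₖ ∏_{j<k} |M (i+j)|` (`absPerpetuity M i`). Then `|R| ≤ q T 0`,
`T i = 1 + |M i| T (i+1)` with `M i` independent of `T (i+1)`, and `𝔼 T i = (1 - 𝔼|M|)⁻¹ < ∞`
because `|M| < 1` a.s. Splitting on `|M i| ≥ 1 - δ`, the tails `f i u = P(T i > u)` satisfy
`f i u ≤ p_δ f (i+1) (u-1) + (1 - p_δ) f (i+1) ((u-1)/(1-δ))`, and Markov gives `f i u ≤ C/u`.
For `δ = 1/n` a maximum principle compares `f` with the strict supersolution
`u ↦ p_δ^((2/3)(u - 9n/8 - 1))`, giving `P(T 0 > 2n) ≤ p_δ^(n/2)`; take `n = x/(2q)`, which is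
allowed as soon as `p_δ` is small, i.e. for large `x`, since `|M|` has no atom at `1`.
-/

open MeasureTheory Filter ProbabilityTheory
open scoped ENNReal Topology

theorem le_of_subsolution_of_supersolution {f : ℕ → ℝ → ℝ} {g s t : ℝ → ℝ} {p θ a b K : ℝ}
    (hp0 : 0 ≤ p) (hp1 : p ≤ 1) (hθ : θ < 1) (hg_pos : ∀ u, 0 < g u) (hg_anti : Antitone g)
    (hfK : ∀ i u, f i u ≤ K) (hf_small : ∀ ε > 0, ∃ U, ∀ i u, U ≤ u → f i u ≤ ε)
    (hbase : ∀ i u, a ≤ u → u < b → f i u ≤ g u)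
    (hs : ∀ u, b ≤ u → a ≤ s u) (ht : ∀ u, b ≤ u → a ≤ t u)
    (hf_rec : ∀ i u, b ≤ u → f i u ≤ p * f (i + 1) (s u) + (1 - p) * f (i + 1) (t u))
    (hg_rec : ∀ u, b ≤ u → p * g (s u) + (1 - p) * g (t u) ≤ θ * g u)
    (i : ℕ) {u : ℝ} (hu : a ≤ u) : f i u ≤ g u := by
  set V : Set ℝ := {v | ∃ i u, a ≤ u ∧ v = f i u - g u}
  have hV_bdd : BddAbove V := ⟨K, by rintro _ ⟨i, u, -, rfl⟩; linarith [hfK i u, hg_pos u]⟩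
  have hV_le : ∀ i u, a ≤ u → f i u - g u ≤ sSup V :=
    fun i u hu ↦ le_csSup hV_bdd ⟨i, u, hu, rfl⟩
  suffices sSup V ≤ 0 by linarith [hV_le i u hu]
  refine le_of_forall_gt_imp_ge_of_dense fun ε hε ↦ ?_
  obtain ⟨U, hU⟩ := hf_small ε hε
  -- Between `b` and `U` the strict supersolution gains at least `(1 - θ) g U` on the supremum.
  have hV : ∀ v ∈ V, v ≤ max ε (sSup V - (1 - θ) * g U) := by
    rintro _ ⟨j, v, hv, rfl⟩
    rcases le_or_gt U v with hUv | hvU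
    · exact le_max_of_le_left (by linarith [hU j v hUv, hg_pos v])
    rcases lt_or_ge v b with hvb | hbv
    · exact le_max_of_le_left (by linarith [hbase j v hv hvb])
    refine le_max_of_le_right ?_
    have hs' := mul_le_mul_of_nonneg_left (hV_le (j + 1) _ (hs v hbv)) hp0
    have ht' := mul_le_mul_of_nonneg_left (hV_le (j + 1) _ (ht v hbv)) (sub_nonneg.2 hp1)
    have hgU := mul_le_mul_of_nonneg_left (hg_anti hvU.le) (sub_nonneg.2 hθ.le)
    linarith [hf_rec j v hbv, hg_rec v hbv]
  have hc : 0 < (1 - θ) * g U := mul_pos (sub_pos.2 hθ) (hg_pos U)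
  rcases le_max_iff.1 (csSup_le (show V.Nonempty from ⟨_, 0, a, le_rfl, rfl⟩) hV) with h | h <;>
    linarith

theorem le_rpow_of_subsolution {f : ℕ → ℝ → ℝ} {p n C : ℝ} (hp0 : 0 < p)
    (hp : p ≤ (1 / 4) ^ 12) (hn : 8 ≤ n) (hf1 : ∀ i u, f i u ≤ 1)
    (hf_decay : ∀ i u, 1 ≤ u → f i u ≤ C / u)
    (hf_rec : ∀ i u, 1 ≤ u →
      f i u ≤ p * f (i + 1) (u - 1) + (1 - p) * f (i + 1) ((u - 1) / (1 - n⁻¹))) :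
    f 0 (2 * n) ≤ p ^ (n / 2) := by
  have hp1 : p ≤ 1 := hp.trans (by norm_num)
  set b : ℝ := 9 * n / 8 + 1 with hb
  -- `p g (u - 1) = p^(1/3) g u` and, as `(u - 1) / (1 - 1/n) ≥ u + 1/8` for `u ≥ b`,
  -- `g ((u - 1) / (1 - 1/n)) ≤ p^(1/12) g u`: a strict supersolution once `p^(1/12) ≤ 1/4`.
  set g : ℝ → ℝ := fun u ↦ p ^ (2 / 3 * (u - b))
  have hg_pos : ∀ u, 0 < g u := fun u ↦ Real.rpow_pos_of_pos hp0 _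
  have hg_anti : Antitone g := fun u v huv ↦
    Real.rpow_le_rpow_of_exponent_ge hp0 hp1 (by linarith)
  have hg_shift : ∀ u c, g (u + c) = p ^ (2 / 3 * c) * g u := fun u c ↦ by
    simp only [g, ← Real.rpow_add hp0]; ring_nf
  have hn_pos : 0 < n := by linarith
  have hδ : 0 < 1 - n⁻¹ := sub_pos.2 (inv_lt_one_of_one_lt₀ (by linarith))
  have ht : ∀ u, b ≤ u → u + 8⁻¹ ≤ (u - 1) / (1 - n⁻¹) := fun u hu ↦ by
    have : 9 / 8 ≤ (u + 8⁻¹) * n⁻¹ := by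
      rw [← div_eq_mul_inv, le_div_iff₀ hn_pos]; linarith
    rw [le_div_iff₀ hδ]
    linarith
  have hg_rec : ∀ u, b ≤ u →
      p * g (u - 1) + (1 - p) * g ((u - 1) / (1 - n⁻¹)) ≤ 1 / 2 * g u := fun u hu ↦ by
    have hg_left : p * g (u - 1) = p ^ (3⁻¹ : ℝ) * g u := by
      simp only [g]
      rw [mul_comm, ← Real.rpow_add_one hp0.ne', ← Real.rpow_add hp0]
      ring_nf
    have hg_right : g ((u - 1) / (1 - n⁻¹)) ≤ p ^ (12⁻¹ : ℝ) * g u := by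
      simpa [hg_shift, show (2 / 3 : ℝ) * 8⁻¹ = 12⁻¹ by norm_num] using hg_anti (ht u hu)
    have hp_third : p ^ (3⁻¹ : ℝ) ≤ p ^ (12⁻¹ : ℝ) :=
      Real.rpow_le_rpow_of_exponent_ge hp0 hp1 (by norm_num)
    have hp_twelfth : p ^ (12⁻¹ : ℝ) ≤ 1 / 4 :=
      calc p ^ (12⁻¹ : ℝ) ≤ ((1 / 4 : ℝ) ^ 12) ^ ((12 : ℕ)⁻¹ : ℝ) :=
            Real.rpow_le_rpow hp0.le hp (by norm_num)
        _ = 1 / 4 := Real.pow_rpow_inv_natCast (by norm_num) (by norm_num)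
    nlinarith [hg_pos u, hg_pos ((u - 1) / (1 - n⁻¹))]
  refine (le_of_subsolution_of_supersolution hp0.le hp1 (by norm_num : (1 / 2 : ℝ) < 1) hg_pos
    hg_anti hf1 (fun ε hε ↦ ⟨max 1 (C / ε), fun i u hu ↦ ?_⟩)
    (fun i u _ hub ↦ (hf1 i u).trans ?_)
    (fun u hu ↦ by linarith) (fun u hu ↦ by linarith [ht u hu])
    (fun i u hu ↦ hf_rec i u (by linarith)) hg_rec 0 (by linarith : b - 1 ≤ 2 * n)).trans ?_
  · have hu1 := (le_max_left _ _).trans hu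
    have hCu := (le_max_right _ _).trans hu
    rw [div_le_iff₀ hε] at hCu
    refine (hf_decay i u hu1).trans ?_
    rw [div_le_iff₀ (by linarith)]
    linarith
  · exact Real.one_le_rpow_of_pos_of_le_one_of_nonpos hp0 hp1 (by linarith)
  · exact Real.rpow_le_rpow_of_exponent_ge hp0 hp1 (by linarith)

theorem ENNReal.tsum_prod_range_eq_one_add_mul (a : ℕ → ℝ≥0∞) :
    ∑' k, ∏ j ∈ Finset.range k, a j = 1 + a 0 * ∑' k, ∏ j ∈ Finset.range k, a (j + 1) := by
  rw [tsum_eq_zero_add' ENNReal.summable, ← ENNReal.tsum_mul_left]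
  simp [Finset.prod_range_succ', mul_comm]

theorem enorm_tsum_mul_prod_le {Q m : ℕ → ℝ} {q : ℝ} (hQ : ∀ k, |Q k| ≤ q) :
    ‖∑' k, Q k * ∏ j ∈ Finset.range k, m j‖ₑ
      ≤ ENNReal.ofReal q * ∑' k, ∏ j ∈ Finset.range k, ‖m j‖ₑ := by
  refine enorm_tsum_le_tsum_enorm.trans ?_
  rw [← ENNReal.tsum_mul_left]
  refine ENNReal.tsum_le_tsum fun k ↦ ?_
  rw [enorm_mul]
  gcongr
  · rw [Real.enorm_eq_ofReal_abs]
    exact ENNReal.ofReal_le_ofReal (hQ k)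
  · simp [enorm_eq_nnnorm]

theorem lintegral_enorm_lt_one {Ω : Type*} [MeasurableSpace Ω] {μ : Measure Ω}
    [IsProbabilityMeasure μ] {Y : Ω → ℝ} (hY : ∀ᵐ ω ∂μ, |Y ω| ≤ 1)
    (hY1 : μ {ω | |Y ω| = 1} = 0) : ∫⁻ ω, ‖Y ω‖ₑ ∂μ < 1 := by
  have hlt : ∀ᵐ ω ∂μ, ‖Y ω‖ₑ < 1 := by
    filter_upwards [hY, measure_eq_zero_iff_ae_notMem.1 hY1] with ω h h1
    rw [Real.enorm_eq_ofReal_abs, ENNReal.ofReal_lt_one]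
    exact lt_of_le_of_ne h h1
  have hle : ∫⁻ ω, ‖Y ω‖ₑ ∂μ ≤ 1 :=
    (lintegral_mono_ae (hlt.mono fun _ h ↦ h.le)).trans (by simp)
  simpa using lintegral_strict_mono (g := fun _ ↦ 1) (IsProbabilityMeasure.ne_zero μ)
    aemeasurable_const (ne_top_of_le_ne_top ENNReal.one_ne_top hle) hlt

theorem tendsto_measure_abs_mem_Icc {Ω : Type*} [MeasurableSpace Ω] {μ : Measure Ω}
    [IsFiniteMeasure μ] {Y : Ω → ℝ} (hYm : Measurable Y) (hY1 : μ {ω | |Y ω| = 1} = 0) :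
    Tendsto (fun δ ↦ μ {ω | 1 - δ ≤ |Y ω| ∧ |Y ω| ≤ 1}) (𝓝[>] 0) (𝓝 0) := by
  have h := tendsto_measure_Icc_nhdsWithin_right' (μ.map fun ω ↦ |Y ω|) 1
  rw [Measure.map_apply hYm.abs (measurableSet_singleton 1)] at h
  refine tendsto_of_tendsto_of_tendsto_of_le_of_le' tendsto_const_nhds (hY1 ▸ h)
    (Eventually.of_forall fun _ ↦ zero_le) ?_
  filter_upwards [self_mem_nhdsWithin] with δ (hδ : 0 < δ)
  rw [Measure.map_apply hYm.abs measurableSet_Icc]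
  exact measure_mono fun ω hω ↦ ⟨hω.1, by linarith [hω.2]⟩

theorem eventually_measureReal_abs_mem_Icc_le {Ω : Type*} [MeasurableSpace Ω] {μ : Measure Ω}
    [IsFiniteMeasure μ] {Y : Ω → ℝ} (hYm : Measurable Y) (hY1 : μ {ω | |Y ω| = 1} = 0)
    {c ε : ℝ} (hc : 0 < c) (hε : 0 < ε) :
    ∀ᶠ x in atTop, μ.real {ω | 1 - c / x ≤ |Y ω| ∧ |Y ω| ≤ 1} ≤ ε := by
  have hδ : Tendsto (fun x : ℝ ↦ c / x) atTop (𝓝[>] 0) :=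
    tendsto_nhdsWithin_iff.2 ⟨tendsto_const_nhds.div_atTop tendsto_id,
      (eventually_gt_atTop 0).mono fun x hx ↦ div_pos hc hx⟩
  filter_upwards [((tendsto_measure_abs_mem_Icc hYm hY1).comp hδ).eventually
    (gt_mem_nhds (ENNReal.ofReal_pos.2 hε))] with x hx
  exact ENNReal.toReal_le_of_le_ofReal hε.le hx.le

theorem ofReal_lt_of_lt_one_add_mul {m u δ : ℝ} {t : ℝ≥0∞} (hm : |m| ≤ 1) (hδ : δ < 1)
    (hu : 1 ≤ u) (h : ENNReal.ofReal u < 1 + ‖m‖ₑ * t) :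
    (1 - δ ≤ |m| ∧ ENNReal.ofReal (u - 1) < t) ∨
      (|m| < 1 - δ ∧ ENNReal.ofReal ((u - 1) / (1 - δ)) < t) := by
  have hlt : ENNReal.ofReal (u - 1) < ‖m‖ₑ * t := by
    rwa [← sub_add_cancel u 1, ENNReal.ofReal_add (by linarith) zero_le_one, ENNReal.ofReal_one,
      add_comm, ENNReal.add_lt_add_iff_left ENNReal.one_ne_top] at h
  rw [Real.enorm_eq_ofReal_abs] at hlt
  rcases le_or_gt (1 - δ) |m| with hm' | hm'
  · refine Or.inl ⟨hm', hlt.trans_le ?_⟩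
    exact mul_le_of_le_one_left' (ENNReal.ofReal_le_one.2 hm)
  · refine Or.inr ⟨hm', ?_⟩
    rw [ENNReal.ofReal_div_of_pos (by linarith), ENNReal.div_lt_iff (by simp [hδ]) (by simp),
      mul_comm]
    exact hlt.trans_le (mul_le_mul_left (ENNReal.ofReal_le_ofReal hm'.le) t)

noncomputable def absPerpetuity {Ω : Type*} (M : ℕ → Ω → ℝ) (i : ℕ) (ω : Ω) : ℝ≥0∞ :=
  ∑' k, ∏ j ∈ Finset.range k, ‖M (i + j) ω‖ₑ

theorem absPerpetuity_eq_one_add_mul {Ω : Type*} {M : ℕ → Ω → ℝ} (i : ℕ) (ω : Ω) :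
    absPerpetuity M i ω = 1 + ‖M i ω‖ₑ * absPerpetuity M (i + 1) ω := by
  simp only [absPerpetuity]
  rw [ENNReal.tsum_prod_range_eq_one_add_mul]
  simp only [add_zero, ← add_assoc, add_right_comm _ _ 1]

theorem measurable_absPerpetuity_tail {Ω : Type*} {M : ℕ → Ω → ℝ} (i : ℕ) :
    Measurable[⨆ j ∈ Set.Ici i, MeasurableSpace.comap (M j) inferInstance]
      (absPerpetuity M i) := by
  let : MeasurableSpace Ω := ⨆ j ∈ Set.Ici i, MeasurableSpace.comap (M j) inferInstance
  refine Measurable.tsum fun k ↦ Finset.measurable_prod _ fun j _ ↦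
    (Measurable.of_comap_le ?_).enorm
  exact le_iSup₂ (f := fun j (_ : j ∈ Set.Ici i) ↦ MeasurableSpace.comap (M j) inferInstance)
    (i + j) (Nat.le_add_right i j)

section AbsPerpetuity

variable {Ω : Type*} [MeasurableSpace Ω] {μ : Measure Ω} {M : ℕ → Ω → ℝ}

theorem measurable_absPerpetuity (hM : ∀ k, Measurable (M k)) (i : ℕ) :
    Measurable (absPerpetuity M i) :=
  (measurable_absPerpetuity_tail i).mono (iSup₂_le fun j _ ↦ (hM j).comap_le) le_rfl

theorem indepFun_absPerpetuity (hM : ∀ k, Measurable (M k)) (hind : iIndepFun M μ) (i : ℕ) :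
    IndepFun (M i) (absPerpetuity M (i + 1)) μ := by
  rw [IndepFun_iff_Indep]
  have h := indep_iSup_of_disjoint (fun k ↦ (hM k).comap_le) hind
    (S := {i}) (T := Set.Ici (i + 1)) (by simp)
  refine indep_of_indep_of_le_left (indep_of_indep_of_le_right h
    (measurable_absPerpetuity_tail (i + 1)).comap_le) ?_
  exact le_iSup₂ (f := fun j (_ : j ∈ ({i} : Set ℕ)) ↦ MeasurableSpace.comap (M j) inferInstance)
    i rfl

theorem lintegral_absPerpetuity (hM : ∀ k, Measurable (M k)) (hind : iIndepFun M μ)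
    (hident : ∀ k, IdentDistrib (M k) (M 0) μ μ) (i : ℕ) :
    ∫⁻ ω, absPerpetuity M i ω ∂μ = (1 - ∫⁻ ω, ‖M 0 ω‖ₑ ∂μ)⁻¹ := by
  have hE : ∀ j, ∫⁻ ω, ‖M j ω‖ₑ ∂μ = ∫⁻ ω, ‖M 0 ω‖ₑ ∂μ := fun j ↦
    ((hident j).comp measurable_enorm).lintegral_eq
  simp only [absPerpetuity]
  rw [lintegral_tsum fun k ↦ (Finset.measurable_prod _ fun j _ ↦ (hM (i + j)).enorm).aemeasurable,
    ← ENNReal.tsum_geometric]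
  refine tsum_congr fun k ↦ ?_
  have hIco : ∀ ω, ∏ j ∈ Finset.range k, ‖M (i + j) ω‖ₑ = ∏ j ∈ Finset.Ico i (i + k), ‖M j ω‖ₑ :=
    fun ω ↦ by rw [Finset.prod_Ico_eq_prod_range, add_tsub_cancel_left]
  simp_rw [hIco]
  rw [lintegral_prod_eq_prod_lintegral_of_indepFun _ (fun j ω ↦ ‖M j ω‖ₑ)
    (hind.comp _ fun _ ↦ measurable_enorm) fun j ↦ (hM j).enorm]
  simp [hE]

theorem measure_absPerpetuity_gt_le (hM : ∀ k, Measurable (M k)) (hind : iIndepFun M μ) {i : ℕ}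
    (hM1 : ∀ᵐ ω ∂μ, |M i ω| ≤ 1) {δ u : ℝ} (hδ : δ < 1) (hu : 1 ≤ u) :
    μ {ω | ENNReal.ofReal u < absPerpetuity M i ω}
      ≤ μ {ω | 1 - δ ≤ |M i ω|} * μ {ω | ENNReal.ofReal (u - 1) < absPerpetuity M (i + 1) ω}
        + μ {ω | |M i ω| < 1 - δ}
          * μ {ω | ENNReal.ofReal ((u - 1) / (1 - δ)) < absPerpetuity M (i + 1) ω} := by
  have hindep := (indepFun_absPerpetuity hM hind i).measure_inter_preimage_eq_mul
  calc μ {ω | ENNReal.ofReal u < absPerpetuity M i ω}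
      ≤ μ ({ω | 1 - δ ≤ |M i ω|} ∩ {ω | ENNReal.ofReal (u - 1) < absPerpetuity M (i + 1) ω})
        + μ ({ω | |M i ω| < 1 - δ}
          ∩ {ω | ENNReal.ofReal ((u - 1) / (1 - δ)) < absPerpetuity M (i + 1) ω}) := by
        refine (measure_mono_ae ?_).trans (measure_union_le _ _)
        filter_upwards [hM1] with ω hω hlt
        change ENNReal.ofReal u < absPerpetuity M i ω at hlt
        rw [absPerpetuity_eq_one_add_mul] at hlt
        exact ofReal_lt_of_lt_one_add_mul hω hδ hu hlt
    _ = _ := congrArg₂ (· + ·)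
        (hindep {x | 1 - δ ≤ |x|} (Set.Ioi _) (measurableSet_le measurable_const measurable_abs)
          measurableSet_Ioi)
        (hindep {x | |x| < 1 - δ} (Set.Ioi _) (measurableSet_lt measurable_abs measurable_const)
          measurableSet_Ioi)

end AbsPerpetuity

theorem ofReal_div_lt_tsum_prod_enorm {Q m : ℕ → ℝ} {q x : ℝ} (hq : 0 < q) (hx : 0 ≤ x)
    (hQ : ∀ k, |Q k| ≤ q) (hxR : x < |∑' k, Q k * ∏ j ∈ Finset.range k, m j|) :
    ENNReal.ofReal (x / q) < ∑' k, ∏ j ∈ Finset.range k, ‖m j‖ₑ := by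
  by_contra! h
  have hle := (enorm_tsum_mul_prod_le (m := m) hQ).trans
    (by gcongr : _ ≤ ENNReal.ofReal q * ENNReal.ofReal (x / q))
  rw [Real.enorm_eq_ofReal_abs, ← ENNReal.ofReal_mul hq.le, mul_div_cancel₀ _ hq.ne',
    ENNReal.ofReal_le_ofReal_iff hx] at hle
  linarith

section Tail

variable {Ω : Type*} [MeasurableSpace Ω] {μ : Measure Ω} [IsProbabilityMeasure μ]
  {M : ℕ → Ω → ℝ}

theorem measureReal_absPerpetuity_gt_le (hM : ∀ k, Measurable (M k)) (hind : iIndepFun M μ)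
    (hident : ∀ k, IdentDistrib (M k) (M 0) μ μ) (hM1 : ∀ᵐ ω ∂μ, |M 0 ω| ≤ 1)
    (hM_ne_one : μ {ω | |M 0 ω| = 1} = 0) {n p : ℝ} (hn : 8 ≤ n)
    (hp_def : p = μ.real {ω | 1 - n⁻¹ ≤ |M 0 ω| ∧ |M 0 ω| ≤ 1}) (hp0 : 0 < p)
    (hp : p ≤ (1 / 4) ^ 12) :
    μ.real {ω | ENNReal.ofReal (2 * n) < absPerpetuity M 0 ω} ≤ p ^ (n / 2) := by
  set β := ∫⁻ ω, ‖M 0 ω‖ₑ ∂μ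
  have hβ : β < 1 := lintegral_enorm_lt_one hM1 hM_ne_one
  have hMi : ∀ i, ∀ᵐ ω ∂μ, |M i ω| ≤ 1 := fun i ↦
    (hident i).symm.ae_snd (p := fun y ↦ |y| ≤ 1)
      (measurableSet_le measurable_abs measurable_const) hM1
  have hL : ∀ i, μ.real {ω | 1 - n⁻¹ ≤ |M i ω|} = p := fun i ↦ by
    rw [hp_def, measureReal_def, measureReal_def]
    congr 1
    refine ((hident i).measure_mem_eq (measurableSet_le measurable_const measurable_abs)).trans
      (measure_congr ?_)
    filter_upwards [hM1] with ω h
    exact propext (and_iff_left h).symm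
  have hLc : ∀ i, μ.real {ω | |M i ω| < 1 - n⁻¹} = 1 - p := fun i ↦ by
    rw [← hL i, ← probReal_compl_eq_one_sub (measurableSet_le measurable_const (hM i).abs)]
    congr 1
    ext ω
    simp only [Set.mem_compl_iff, Set.mem_ofPred_eq, not_le]
  refine le_rpow_of_subsolution
    (f := fun i u ↦ μ.real {ω | ENNReal.ofReal u < absPerpetuity M i ω})
    (C := ((1 - β)⁻¹).toReal) hp0 hp hn (fun _ _ ↦ measureReal_le_one) (fun i u hu ↦ ?_)
    (fun i u hu ↦ ?_)
  · have hu0 : 0 < u := by linarith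
    have hMarkov := meas_ge_le_lintegral_div (μ := μ) (measurable_absPerpetuity hM i).aemeasurable
      (ENNReal.ofReal_pos.2 hu0).ne' ENNReal.ofReal_ne_top
    rw [lintegral_absPerpetuity hM hind hident] at hMarkov
    calc μ.real {ω | ENNReal.ofReal u < absPerpetuity M i ω}
        ≤ μ.real {ω | ENNReal.ofReal u ≤ absPerpetuity M i ω} :=
          measureReal_mono fun ω (h : ENNReal.ofReal u < _) ↦ h.le
      _ ≤ ((1 - β)⁻¹ / ENNReal.ofReal u).toReal :=
          ENNReal.toReal_mono (ENNReal.div_ne_top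
            (ENNReal.inv_ne_top.2 (tsub_pos_of_lt hβ).ne') (by simpa using hu0)) hMarkov
      _ = ((1 - β)⁻¹).toReal / u := by rw [ENNReal.toReal_div, ENNReal.toReal_ofReal hu0.le]
  · have h := measure_absPerpetuity_gt_le hM hind (hMi i) (δ := n⁻¹)
      (inv_lt_one_of_one_lt₀ (by linarith)) hu
    rw [← hLc i, ← hL i]
    refine (ENNReal.toReal_mono (by finiteness) h).trans_eq ?_
    rw [ENNReal.toReal_add (by finiteness) (by finiteness), ENNReal.toReal_mul,
      ENNReal.toReal_mul]
    rfl

theorem measureReal_lt_abs_le_absPerpetuity {Q : ℕ → Ω → ℝ} {R : Ω → ℝ} {q x : ℝ}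
    (hq : 0 < q) (hx : 0 ≤ x) (hQ : ∀ᵐ ω ∂μ, ∀ k, |Q k ω| ≤ q)
    (hR : ∀ ω, R ω = ∑' k, Q k ω * ∏ j ∈ Finset.range k, M j ω) :
    μ.real {ω | x < |R ω|} ≤ μ.real {ω | ENNReal.ofReal (x / q) < absPerpetuity M 0 ω} := by
  refine ENNReal.toReal_mono (measure_ne_top _ _) (measure_mono_ae ?_)
  filter_upwards [hQ] with ω hQω (hxR : x < |R ω|)
  show ENNReal.ofReal (x / q) < absPerpetuity M 0 ω
  simpa [absPerpetuity] using ofReal_div_lt_tsum_prod_enorm hq hx hQω (hR ω ▸ hxR)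

end Tail

theorem stmt_11_general {Ω : Type*} [MeasureSpace Ω] (μ : Measure Ω) [IsProbabilityMeasure μ]
    (M Q : ℕ → Ω → ℝ) (hMm : ∀ k, Measurable (M k))
    (hindep : ProbabilityTheory.iIndepFun
      (fun k ω => (M k ω, Q k ω)) μ)
    (hident : ∀ k, ProbabilityTheory.IdentDistrib
      (fun ω => (M k ω, Q k ω)) (fun ω => (M 0 ω, Q 0 ω)) μ μ)
    (q : ℝ) (hq : 0 < q)
    (hM1 : ∀ᵐ ω ∂μ, |M 0 ω| ≤ 1)
    (hnoatom : μ {ω | |M 0 ω| = 1} = 0)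
    (hQq : ∀ᵐ ω ∂μ, |Q 0 ω| ≤ q)
    (R : Ω → ℝ) (hR : ∀ ω, R ω = ∑' k : ℕ, Q k ω * ∏ j ∈ Finset.range k, M j ω) :
    ∃ x₀ : ℝ, ∀ x : ℝ, x₀ ≤ x →
      (μ {ω | x < |R ω|}).toReal
        ≤ Real.exp ((x / (4 * q))
            * Real.log ((μ {ω | 1 - 2 * q / x ≤ |M 0 ω| ∧ |M 0 ω| ≤ 1}).toReal)) := by
  have hMind : iIndepFun M μ := hindep.comp (fun _ ↦ Prod.fst) fun _ ↦ measurable_fst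
  have hMid : ∀ k, IdentDistrib (M k) (M 0) μ μ := fun k ↦ (hident k).comp measurable_fst
  have hQ : ∀ᵐ ω ∂μ, ∀ k, |Q k ω| ≤ q := ae_all_iff.2 fun k ↦
    ((hident k).comp measurable_snd).symm.ae_snd (p := fun y ↦ |y| ≤ q)
      (measurableSet_le measurable_abs measurable_const) hQq
  refine eventually_atTop.1 ?_
  filter_upwards [eventually_ge_atTop (16 * q), eventually_measureReal_abs_mem_Icc_le (hMm 0)
    hnoatom (by positivity : 0 < 2 * q) (by norm_num : (0 : ℝ) < (1 / 4) ^ 12)] with x hx hpx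
  simp only [← measureReal_def]
  obtain ⟨n, hn_def⟩ : ∃ n, n = x / (2 * q) := ⟨_, rfl⟩
  have hx0 : 0 < x := by linarith
  have hn : 8 ≤ n := by rw [hn_def, le_div_iff₀ (by positivity)]; linarith
  rw [show 2 * q / x = n⁻¹ by rw [hn_def, inv_div]] at hpx ⊢
  obtain ⟨p, hp_def⟩ : ∃ p, p = μ.real {ω | 1 - n⁻¹ ≤ |M 0 ω| ∧ |M 0 ω| ≤ 1} := ⟨_, rfl⟩
  rw [← hp_def]
  obtain hp0 | hp0 := (hp_def ▸ measureReal_nonneg : 0 ≤ p).eq_or_lt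
  · -- `Real.log 0 = 0`, so here the claimed bound is the trivial one
    rw [← hp0, Real.log_zero, mul_zero, Real.exp_zero]
    exact measureReal_le_one
  calc μ.real {ω | x < |R ω|}
      ≤ μ.real {ω | ENNReal.ofReal (2 * n) < absPerpetuity M 0 ω} := by
        simpa only [show x / q = 2 * n by rw [hn_def]; field_simp]
          using measureReal_lt_abs_le_absPerpetuity hq hx0.le hQ hR
    _ ≤ _ := measureReal_absPerpetuity_gt_le hMm hMind hMid hM1 hnoatom hn hp_def hp0
        (hp_def ▸ hpx)
    _ = _ := by rw [Real.rpow_def_of_pos hp0, hn_def]; congr 1; ring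

/-- main upper bound: if `|M| ≤ 1` a.s., `|M|` has no atom at `1`,
`|Q| ≤ q` a.s., and `R = ∑_{k≥1} Q_k ∏_{j=1}^{k-1} M_j` for i.i.d. copies
`(M_k, Q_k)` of `(M, Q)`, then for all sufficiently large `x`,
`P(|R| > x) ≤ exp((x/(4q)) ln p_{2q/x})` where `p_δ = P(1-δ ≤ |M| ≤ 1)`. -/
theorem stmt_11 {Ω : Type*} [MeasureSpace Ω] (μ : Measure Ω) [IsProbabilityMeasure μ]
    (M Q : ℕ → Ω → ℝ) (hMm : ∀ k, Measurable (M k)) (hQm : ∀ k, Measurable (Q k))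
    (hindep : ProbabilityTheory.iIndepFun
      (fun k ω => (M k ω, Q k ω)) μ)
    (hident : ∀ k, ProbabilityTheory.IdentDistrib
      (fun ω => (M k ω, Q k ω)) (fun ω => (M 0 ω, Q 0 ω)) μ μ)
    (q : ℝ) (hq : 0 < q)
    (hM1 : ∀ᵐ ω ∂μ, |M 0 ω| ≤ 1)
    (hnoatom : μ {ω | |M 0 ω| = 1} = 0)
    (hQq : ∀ᵐ ω ∂μ, |Q 0 ω| ≤ q)
    (R : Ω → ℝ) (hR : ∀ ω, R ω = ∑' k : ℕ, Q k ω * ∏ j ∈ Finset.range k, M j ω) :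
    ∃ x₀ : ℝ, ∀ x : ℝ, x₀ ≤ x →
      (μ {ω | x < |R ω|}).toReal
        ≤ Real.exp ((x / (4 * q))
            * Real.log ((μ {ω | 1 - 2 * q / x ≤ |M 0 ω| ∧ |M 0 ω| ≤ 1}).toReal)) :=
  stmt_11_general μ M Q hMm hindep hident q hq hM1 hnoatom hQq R hR
end
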